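/- The function f_{T,ℓ} defined by f_{T,ℓ}(t) = (4t/ℓ⁴)(πℓ²/2 - 2ℓt + t²/2) on [0, ℓ], (4t/ℓ⁴)(ℓ²·arcsin((2ℓ² - t²)/t²) + 2ℓ√(t² - ℓ²) - ℓ² - t²/2) on [ℓ, √2·ℓ], and 0 elsewhere, is nonnegative and integrates to 1 over ℝ. -/

import Mathlib

open MeasureTheory Real

/-- The density `f_{T,ℓ}` of the distance between two independent uniform points in a
square of side `ℓ`. -/
noncomputable def fTL (ℓ t : ℝ) : ℝ :=
  if t ∈ Set.Icc 0 ℓ then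
    4 * t / ℓ ^ 4 * (Real.pi * ℓ ^ 2 / 2 - 2 * ℓ * t + t ^ 2 / 2)
  else if t ∈ Set.Icc ℓ (Real.sqrt 2 * ℓ) then
    4 * t / ℓ ^ 4 *
      (ℓ ^ 2 * Real.arcsin ((2 * ℓ ^ 2 - t ^ 2) / t ^ 2) +
        2 * ℓ * Real.sqrt (t ^ 2 - ℓ ^ 2) - ℓ ^ 2 - t ^ 2 / 2)
  else 0

/-!
Substituting `t = ℓ s` gives `f_{T,ℓ}(t) = ℓ⁻¹ f_{T,1}(t / ℓ)`, so it suffices to treat `ℓ = 1`.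
On `[1, √2]` the identity `arcsin (2u² - 1) = 2 arcsin u - π / 2` at `u = 1 / t` turns the bracket
into `2 arcsin t⁻¹ - π / 2 + 2 √(t² - 1) - 1 - t² / 2`, whose derivative `2 √(t² - 1) / t - t` is
nonpositive by AM-GM and which vanishes at `√2`; hence the density is nonnegative. Explicit
antiderivatives give the masses `π - 13 / 6` on `[0, 1]` and `19 / 6 - π` on `[1, √2]`.
-/

open Set

lemma arcsin_two_mul_sq_sub_one {u : ℝ} (h0 : 0 ≤ u) (h1 : u ≤ 1) :
    arcsin (2 * u ^ 2 - 1) = 2 * arcsin u - π / 2 := by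
  have hcos : cos (arcsin u) ^ 2 = 1 - u ^ 2 := by
    rw [cos_sq', sin_arcsin (by linarith) h1]
  rw [← arcsin_sin (x := 2 * arcsin u - π / 2), sin_sub_pi_div_two, cos_two_mul, hcos]
  · ring_nf
  · linarith [arcsin_nonneg.2 h0]
  · linarith [arcsin_le_pi_div_two u]

lemma arcsin_inv_sqrt_two : arcsin (√2)⁻¹ = π / 4 := by
  have hinv : (√2)⁻¹ = sin (π / 4) := by
    rw [sin_pi_div_four, eq_div_iff two_ne_zero, ← div_eq_inv_mul, div_sqrt]
  rw [hinv, arcsin_sin (by linarith [pi_pos]) (by linarith [pi_pos])]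

lemma hasDerivAt_sqrt_sq_sub_one {t : ℝ} (ht : 1 < t) :
    HasDerivAt (fun t => √(t ^ 2 - 1)) (t / √(t ^ 2 - 1)) t := by
  have hpos : 0 < t ^ 2 - 1 := by nlinarith
  convert ((hasDerivAt_pow 2 t).sub_const 1).sqrt hpos.ne' using 1
  field_simp
  ring

lemma hasDerivAt_arcsin_inv {t : ℝ} (ht : 1 < t) :
    HasDerivAt (fun t => arcsin t⁻¹) (-(t * √(t ^ 2 - 1))⁻¹) t := by
  have ht0 : 0 < t := one_pos.trans ht
  have hsqrt : √(1 - t⁻¹ ^ 2) = √(t ^ 2 - 1) / t := by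
    rw [show 1 - t⁻¹ ^ 2 = (t ^ 2 - 1) / t ^ 2 by field_simp, sqrt_div' _ (sq_nonneg t),
      sqrt_sq ht0.le]
  refine ((hasDerivAt_arcsin (by linarith [inv_pos.2 ht0])
    (inv_lt_one_of_one_lt₀ ht).ne).comp t (hasDerivAt_inv ht0.ne')).congr_deriv ?_
  rw [hsqrt]
  field_simp

lemma intervalIntegrable_of_eqOn_Icc {f g : ℝ → ℝ} {a b : ℝ} (hab : a ≤ b)
    (hg : ContinuousOn g (Icc a b)) (hfg : EqOn f g (Icc a b)) :
    IntervalIntegrable f volume a b :=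
  (intervalIntegrable_congr (hfg.mono (uIoc_of_le hab ▸ Ioc_subset_Icc_self))).2
    (hg.intervalIntegrable_of_Icc hab)

lemma fTL_eq_inv_mul_fTL_one_div {ℓ : ℝ} (hℓ : 0 < ℓ) (t : ℝ) :
    fTL ℓ t = ℓ⁻¹ * fTL 1 (t / ℓ) := by
  have hinner : t ∈ Icc 0 ℓ ↔ t / ℓ ∈ Icc 0 1 := by
    simp only [mem_Icc, le_div_iff₀ hℓ, zero_mul, div_le_one hℓ]
  have houter : t ∈ Icc ℓ (√2 * ℓ) ↔ t / ℓ ∈ Icc 1 (√2 * 1) := by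
    simp only [mem_Icc, one_le_div hℓ, div_le_iff₀ hℓ, mul_one]
  have harg : (2 * ℓ ^ 2 - t ^ 2) / t ^ 2 = (2 * 1 ^ 2 - (t / ℓ) ^ 2) / (t / ℓ) ^ 2 := by
    field_simp
  have hsqrt : √(t ^ 2 - ℓ ^ 2) = ℓ * √((t / ℓ) ^ 2 - 1 ^ 2) := by
    rw [show t ^ 2 - ℓ ^ 2 = ℓ ^ 2 * ((t / ℓ) ^ 2 - 1 ^ 2) by field_simp,
      sqrt_mul (sq_nonneg ℓ), sqrt_sq hℓ.le]
  simp only [fTL, hinner, houter]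
  split_ifs
  · field_simp
  · rw [harg, hsqrt]
    field_simp
  · simp

noncomputable def outerBracket (t : ℝ) : ℝ :=
  2 * arcsin t⁻¹ - π / 2 + 2 * √(t ^ 2 - 1) - 1 - t ^ 2 / 2

lemma hasDerivAt_outerBracket {t : ℝ} (ht : 1 < t) :
    HasDerivAt outerBracket (2 * √(t ^ 2 - 1) / t - t) t := by
  have hsq : √(t ^ 2 - 1) ^ 2 = t ^ 2 - 1 := sq_sqrt (by nlinarith)
  have hs : 0 < √(t ^ 2 - 1) := sqrt_pos.2 (by nlinarith)
  refine (((((hasDerivAt_arcsin_inv ht).const_mul 2).sub_const (π / 2)).add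
    ((hasDerivAt_sqrt_sq_sub_one ht).const_mul 2)).sub_const 1).sub
    ((hasDerivAt_pow 2 t).div_const 2) |>.congr_deriv ?_
  field_simp
  linear_combination (-4) * hsq

lemma continuousOn_outerBracket : ContinuousOn outerBracket (Ici 1) := by
  unfold outerBracket
  fun_prop (disch := intro x hx; exact (zero_lt_one.trans_le hx).ne')

lemma continuousOn_mul_outerBracket : ContinuousOn (fun t => 4 * t * outerBracket t) (Ici 1) :=
  (continuous_const.mul continuous_id).continuousOn.mul continuousOn_outerBracket

lemma outerBracket_sqrt_two : outerBracket √2 = 0 := by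
  have hsqrt : √(√2 ^ 2 - 1) = 1 := by norm_num
  rw [outerBracket, arcsin_inv_sqrt_two, hsqrt]
  norm_num
  ring

lemma antitoneOn_outerBracket : AntitoneOn outerBracket (Ici 1) := by
  refine antitoneOn_of_hasDerivWithinAt_nonpos (convex_Ici 1) continuousOn_outerBracket
    (fun x hx => (hasDerivAt_outerBracket (by simpa using hx)).hasDerivWithinAt) fun x hx => ?_
  rw [interior_Ici, mem_Ioi] at hx
  have hamgm : 2 * √(x ^ 2 - 1) ≤ x ^ 2 := by
    nlinarith [sq_sqrt (show 0 ≤ x ^ 2 - 1 by nlinarith), sq_nonneg (√(x ^ 2 - 1) - 1)]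
  rw [sub_nonpos, div_le_iff₀ (one_pos.trans hx)]
  nlinarith

lemma outerBracket_nonneg {t : ℝ} (ht : t ∈ Icc 1 √2) : 0 ≤ outerBracket t := by
  simpa [outerBracket_sqrt_two] using
    antitoneOn_outerBracket ht.1 one_lt_sqrt_two.le ht.2

lemma fTL_one_of_mem_Icc_zero_one {t : ℝ} (ht : t ∈ Icc 0 1) :
    fTL 1 t = 4 * t * (π / 2 - 2 * t + t ^ 2 / 2) := by
  simp [fTL, ht]

lemma fTL_one_of_mem_Icc_one_sqrt_two {t : ℝ} (ht : t ∈ Icc 1 √2) :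
    fTL 1 t = 4 * t * outerBracket t := by
  obtain rfl | hlt := ht.1.eq_or_lt
  · rw [fTL_one_of_mem_Icc_zero_one ⟨zero_le_one, le_rfl⟩, outerBracket]
    norm_num
    ring
  have ht0 : 0 < t := one_pos.trans hlt
  have harcsin : arcsin ((2 - t ^ 2) / t ^ 2) = 2 * arcsin t⁻¹ - π / 2 := by
    rw [← arcsin_two_mul_sq_sub_one (inv_nonneg.2 ht0.le) (inv_le_one_of_one_le₀ ht.1)]
    congr 1
    field_simp
  have hnot : t ∉ Icc 0 1 := fun h => hlt.not_ge h.2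
  simp only [fTL, hnot, if_false, mul_one, show t ∈ Icc 1 √2 from ht, if_true]
  rw [outerBracket]
  norm_num [harcsin]

lemma fTL_one_of_notMem_Ioc {t : ℝ} (ht : t ∉ Ioc 0 √2) : fTL 1 t = 0 := by
  simp only [mem_Ioc, not_and_or, not_lt, not_le] at ht
  unfold fTL
  split_ifs with h1 h2
  · obtain rfl : t = 0 := by
      rcases ht with ht | ht
      · exact le_antisymm ht h1.1
      · linarith [h1.2, one_lt_sqrt_two]
    simp
  · rcases ht with ht | ht <;> linarith [h2.1, h2.2]
  · rfl

lemma fTL_one_nonneg (t : ℝ) : 0 ≤ fTL 1 t := by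
  by_cases hinner : t ∈ Icc 0 1
  · rw [fTL_one_of_mem_Icc_zero_one hinner]
    have := mul_nonneg (sub_nonneg.2 hinner.2) (by linarith [hinner.2] : (0:ℝ) ≤ 3 - t)
    exact mul_nonneg (by linarith [hinner.1]) (by nlinarith [pi_gt_three])
  by_cases houter : t ∈ Icc 1 √2
  · rw [fTL_one_of_mem_Icc_one_sqrt_two houter]
    exact mul_nonneg (by linarith [houter.1]) (outerBracket_nonneg houter)
  rw [fTL_one_of_notMem_Ioc fun h => ?_]
  rcases le_total t 1 with ht | ht
  exacts [hinner ⟨h.1.le, ht⟩, houter ⟨ht, h.2⟩]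

noncomputable def outerPrimitive (t : ℝ) : ℝ :=
  4 * t ^ 2 * arcsin t⁻¹ + 4 * √(t ^ 2 - 1) - π * t ^ 2 + 8 / 3 * √(t ^ 2 - 1) ^ 3 - 2 * t ^ 2
    - t ^ 4 / 2

lemma hasDerivAt_outerPrimitive {t : ℝ} (ht : 1 < t) :
    HasDerivAt outerPrimitive (4 * t * outerBracket t) t := by
  have hs : 0 < √(t ^ 2 - 1) := sqrt_pos.2 (by nlinarith)
  have hpow (n : ℕ) := hasDerivAt_pow n t
  refine (((((((hpow 2).const_mul 4).mul (hasDerivAt_arcsin_inv ht)).add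
    ((hasDerivAt_sqrt_sq_sub_one ht).const_mul 4)).sub ((hpow 2).const_mul π)).add
    (((hasDerivAt_sqrt_sq_sub_one ht).pow 3).const_mul (8 / 3))).sub
    ((hpow 2).const_mul 2)).sub ((hpow 4).div_const 2) |>.congr_deriv ?_
  rw [outerBracket]
  field_simp
  ring

lemma continuousOn_outerPrimitive : ContinuousOn outerPrimitive (Ici 1) := by
  unfold outerPrimitive
  fun_prop (disch := intro x hx; exact (zero_lt_one.trans_le hx).ne')

lemma outerPrimitive_one : outerPrimitive 1 = π - 5 / 2 := by
  norm_num [outerPrimitive]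
  ring

lemma outerPrimitive_sqrt_two : outerPrimitive √2 = 2 / 3 := by
  have hsqrt : √(√2 ^ 2 - 1) = 1 := by norm_num
  have h4 : √2 ^ 4 = 4 := by
    rw [show 4 = 2 * 2 by rfl, pow_mul]
    norm_num
  rw [outerPrimitive, arcsin_inv_sqrt_two, hsqrt, h4]
  norm_num
  ring

lemma integral_fTL_one_zero_one : ∫ t in (0:ℝ)..1, fTL 1 t = π - 13 / 6 := by
  have hpow (n : ℕ) (t : ℝ) := hasDerivAt_pow n t
  rw [intervalIntegral.integral_congr fun t ht =>
      fTL_one_of_mem_Icc_zero_one (uIcc_of_le (zero_le_one (α := ℝ)) ▸ ht),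
    intervalIntegral.integral_eq_sub_of_hasDerivAt
      (f := fun t => π * t ^ 2 - 8 / 3 * t ^ 3 + t ^ 4 / 2)
      (fun t _ => (((hpow 2 t).const_mul π).sub ((hpow 3 t).const_mul (8 / 3))).add
        ((hpow 4 t).div_const 2) |>.congr_deriv (by ring))
      ((by fun_prop : Continuous _).intervalIntegrable 0 1)]
  ring

lemma integral_fTL_one_one_sqrt_two : ∫ t in (1:ℝ)..√2, fTL 1 t = 19 / 6 - π := by
  have hle : (1:ℝ) ≤ √2 := one_lt_sqrt_two.le
  rw [intervalIntegral.integral_congr fun t ht =>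
      fTL_one_of_mem_Icc_one_sqrt_two (uIcc_of_le hle ▸ ht),
    intervalIntegral.integral_eq_sub_of_hasDerivAt_of_le hle
      (continuousOn_outerPrimitive.mono Icc_subset_Ici_self)
      (fun t ht => hasDerivAt_outerPrimitive ht.1)
      ((continuousOn_mul_outerBracket.mono Icc_subset_Ici_self).intervalIntegrable_of_Icc hle),
    outerPrimitive_sqrt_two, outerPrimitive_one]
  ring

lemma integral_fTL_one : ∫ t, fTL 1 t = 1 := by
  have hle : (1:ℝ) ≤ √2 := one_lt_sqrt_two.le
  have hinner : IntervalIntegrable (fTL 1) volume 0 1 :=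
    intervalIntegrable_of_eqOn_Icc zero_le_one
      (by fun_prop : Continuous fun t : ℝ => 4 * t * (π / 2 - 2 * t + t ^ 2 / 2)).continuousOn
      fun t ht => fTL_one_of_mem_Icc_zero_one ht
  have houter : IntervalIntegrable (fTL 1) volume 1 √2 :=
    intervalIntegrable_of_eqOn_Icc hle (continuousOn_mul_outerBracket.mono Icc_subset_Ici_self)
      fun t ht => fTL_one_of_mem_Icc_one_sqrt_two ht
  rw [← setIntegral_eq_integral_of_forall_compl_eq_zero fun t ht => fTL_one_of_notMem_Ioc ht,
    ← intervalIntegral.integral_of_le (zero_le_one.trans hle),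
    ← intervalIntegral.integral_add_adjacent_intervals hinner houter,
    integral_fTL_one_zero_one, integral_fTL_one_one_sqrt_two]
  ring

/-- `f_{T,ℓ}` is nonnegative and integrates to `1` over `ℝ`. -/
theorem stmt_5 (ℓ : ℝ) (hℓ : 0 < ℓ) :
    (∀ t, 0 ≤ fTL ℓ t) ∧ ∫ t, fTL ℓ t = 1 := by
  simp_rw [fTL_eq_inv_mul_fTL_one_div hℓ]
  refine ⟨fun t => mul_nonneg (inv_nonneg.2 hℓ.le) (fTL_one_nonneg _), ?_⟩
  rw [integral_const_mul, Measure.integral_comp_div, integral_fTL_one, abs_of_pos hℓ,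
    smul_eq_mul, mul_one, inv_mul_cancel₀ hℓ.ne']
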